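/- Let G be a bipartite graph with a strictly positive weight function w on its vertices, and let u be the starting vertex. The position (G,u,w) of the game NimG-RM (remove tokens then move, no loops) is a first-player win under misère convention if and only if every maximum matching of G covers the vertex u. -/

import Mathlib

universe u
mutual
  inductive GNormalWin {α : Type u} (moves : α → α → Prop) : α → Prop
    | step {p q : α} : moves p q → GNormalLose moves q → GNormalWin moves p
  inductive GNormalLose {α : Type u} (moves : α → α → Prop) : α → Prop
    | intro {p : α} : (∀ q, moves p q → GNormalWin moves q) → GNormalLose moves p
end

mutual
  inductive GMisereWin {α : Type u} (moves : α → α → Prop) : α → Prop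
    | terminal {p : α} : (∀ q, ¬ moves p q) → GMisereWin moves p
    | step {p q : α} : moves p q → GMisereLose moves q → GMisereWin moves p
  inductive GMisereLose {α : Type u} (moves : α → α → Prop) : α → Prop
    | intro {p q₀ : α} : moves p q₀ → (∀ q, moves p q → GMisereWin moves q) → GMisereLose moves p
end

def nimMove {V : Type u} (adj : V → V → Prop) (p q : V × (V → ℕ)) : Prop :=
  adj p.1 q.1 ∧ q.2 p.1 < p.2 p.1 ∧ ∀ v, v ≠ p.1 → q.2 v = p.2 v

mutual
  inductive NimRMWin {V : Type u} (adj : V → V → Prop) : V × (V → ℕ) → Prop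
    | zero {p} : p.2 p.1 = 0 → NimRMWin adj p
    | step {p q} : nimMove adj p q → NimRMLose adj q → NimRMWin adj p
  inductive NimRMLose {V : Type u} (adj : V → V → Prop) : V × (V → ℕ) → Prop
    | intro {p} : p.2 p.1 ≠ 0 → (∀ q, nimMove adj p q → NimRMWin adj q) → NimRMLose adj p
end

def vgMove {V : Type u} (A : V → V → Prop) (p q : Set V × V) : Prop :=
  A p.2 q.2 ∧ q.2 ∈ p.1 ∧ q.2 ≠ p.2 ∧ q.1 = p.1 \ {p.2}

def addOut {V : Type u} (A : V → V → Prop) : V ⊕ V → V ⊕ V → Prop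
  | .inl a, .inl b => A a b
  | .inl a, .inr b => a = b
  | _, _ => False

def MaxMatching {V : Type u} (G : SimpleGraph V) (M : G.Subgraph) : Prop :=
  M.IsMatching ∧ ∀ N : G.Subgraph, N.IsMatching → N.edgeSet.ncard ≤ M.edgeSet.ncard


/-! Let `T` be the set of vertices still carrying tokens and `ν T` the matching number of the
subgraph induced by `T`. A position `(u, w)` is a misère win exactly when `w u = 0` or every
maximum matching of `G[T]` covers `u`, i.e. `ν (T \ {u}) < ν T`. From such a position the mover
empties `u` and follows the edge `uv` of a maximum matching; then `ν (T \ {u, v}) = ν (T \ {u})`,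
so `v` is missed by some maximum matching of the new token set. Conversely, if some maximum
matching misses `u`, every move to a neighbour `z` lands on a vertex covered by every maximum
matching: if `u` was emptied, because otherwise adding `uz` would beat `ν T`; if not, by König's
theorem, since a minimum vertex cover of the bipartite graph `G[T]` cannot contain `u` and so
contains `z`. -/

open Finset

section Game

variable {V : Type*} [Fintype V] {adj : V → V → Prop} {p q : V × (V → ℕ)}

theorem nimMove_sum_lt (h : nimMove adj p q) : ∑ v, q.2 v < ∑ v, p.2 v := by
  obtain ⟨-, hlt, heq⟩ := h
  refine sum_lt_sum (fun v _ => ?_) ⟨p.1, mem_univ _, hlt⟩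
  by_cases hv : v = p.1
  · exact hv ▸ hlt.le
  · exact (heq v hv).le

theorem NimRMWin.not_lose (hW : NimRMWin adj p) : ¬ NimRMLose adj p := by
  induction hn : ∑ v, p.2 v using Nat.strong_induction_on generalizing p with
  | _ n ih =>
  rintro ⟨hp, hmoves⟩
  cases hW with
  | zero h => exact hp h
  | step hmove hL => exact ih _ (hn ▸ nimMove_sum_lt hmove) (hmoves _ hmove) rfl hL

theorem nimRMWin_iff_of_forall (P : V × (V → ℕ) → Prop)
    (hzero : ∀ p : V × (V → ℕ), p.2 p.1 = 0 → P p)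
    (hwin : ∀ p : V × (V → ℕ), P p → p.2 p.1 ≠ 0 → ∃ q, nimMove adj p q ∧ ¬ P q)
    (hlose : ∀ p : V × (V → ℕ), ¬ P p → ∀ q, nimMove adj p q → P q)
    (p : V × (V → ℕ)) :
    NimRMWin adj p ↔ P p := by
  have key : ∀ p, (P p → NimRMWin adj p) ∧ (¬ P p → NimRMLose adj p) := by
    intro p
    induction hn : ∑ v, p.2 v using Nat.strong_induction_on generalizing p with
    | _ n ih =>
    refine ⟨fun hP => ?_, fun hP => ?_⟩
    · by_cases hp : p.2 p.1 = 0
      · exact .zero hp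
      obtain ⟨q, hmove, hq⟩ := hwin p hP hp
      exact .step hmove ((ih _ (hn ▸ nimMove_sum_lt hmove) q rfl).2 hq)
    · exact .intro (fun hp => hP (hzero p hp)) fun q hmove =>
        (ih _ (hn ▸ nimMove_sum_lt hmove) q rfl).1 (hlose p hP q hmove)
  exact ⟨fun hW => by_contra fun hP => hW.not_lose ((key p).2 hP), (key p).1⟩

def tokens (w : V → ℕ) : Finset V := {v | w v ≠ 0}

@[simp] theorem mem_tokens {w : V → ℕ} {v : V} : v ∈ tokens w ↔ w v ≠ 0 := by
  simp [tokens]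

variable [DecidableEq V] {w w' : V → ℕ} {u : V}

theorem tokens_eq_of_ne_zero (h : ∀ v ≠ u, w' v = w v) (hu : w u ≠ 0) (hu' : w' u ≠ 0) :
    tokens w' = tokens w := by
  ext v
  by_cases hv : v = u
  · subst hv; simp [hu, hu']
  · simp [h v hv]

theorem tokens_eq_erase (h : ∀ v ≠ u, w' v = w v) (hu' : w' u = 0) :
    tokens w' = (tokens w).erase u := by
  ext v
  by_cases hv : v = u
  · subst hv; simp [hu']
  · simp [h v hv, hv]

end Game

namespace SimpleGraph

variable {V : Type*} (G : SimpleGraph V)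

structure IsMatchingOn (S : Finset V) (M : Finset (Sym2 V)) : Prop where
  subset_sym2 : M ⊆ S.sym2
  mem_edgeSet : ∀ e ∈ M, e ∈ G.edgeSet
  eq_of_mem_of_mem : ∀ ⦃e f v⦄, e ∈ M → f ∈ M → v ∈ e → v ∈ f → e = f

open Classical in
noncomputable def matchingNumOn (S : Finset V) : ℕ :=
  ({M ∈ S.sym2.powerset | G.IsMatchingOn S M} : Finset _).sup card

def IsVertexCoverOn (S K : Finset V) : Prop :=
  ∀ a ∈ S, ∀ b ∈ S, G.Adj a b → a ∈ K ∨ b ∈ K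

def neighborFinsetOn [DecidableRel G.Adj] (S B : Finset V) : Finset V :=
  {y ∈ S | ∃ b ∈ B, G.Adj b y}

variable {G} {S T K : Finset V} {M : Finset (Sym2 V)} {u v z : V}

theorem IsMatchingOn.mono (h : G.IsMatchingOn S M) (hST : S ⊆ T) : G.IsMatchingOn T M :=
  { h with subset_sym2 := h.subset_sym2.trans (sym2_mono hST) }

theorem card_le_matchingNumOn (h : G.IsMatchingOn S M) : #M ≤ G.matchingNumOn S := by
  classical
  exact le_sup (f := card) (mem_filter.mpr ⟨mem_powerset.mpr h.subset_sym2, h⟩)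

theorem exists_isMatchingOn_card_eq (G : SimpleGraph V) (S : Finset V) :
    ∃ M, G.IsMatchingOn S M ∧ #M = G.matchingNumOn S := by
  classical
  have hempty : G.IsMatchingOn S ∅ := ⟨empty_subset _, by simp, by simp⟩
  obtain ⟨M, hM, hcard⟩ := exists_mem_eq_sup {M ∈ S.sym2.powerset | G.IsMatchingOn S M}
    ⟨∅, mem_filter.mpr ⟨empty_mem_powerset _, hempty⟩⟩ card
  refine ⟨M, (mem_filter.mp hM).2, ?_⟩
  rw [matchingNumOn, hcard]

theorem matchingNumOn_mono (hST : S ⊆ T) : G.matchingNumOn S ≤ G.matchingNumOn T := by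
  obtain ⟨M, hM, hcard⟩ := exists_isMatchingOn_card_eq G S
  exact hcard ▸ card_le_matchingNumOn (hM.mono hST)

theorem matchingNumOn_le_card (hK : G.IsVertexCoverOn S K) : G.matchingNumOn S ≤ #K := by
  obtain ⟨M, hM, hcard⟩ := exists_isMatchingOn_card_eq G S
  rw [← hcard]
  refine card_le_card_of_forall_subsingleton (fun e x => x ∈ e) (fun e he => ?_)
    fun x _ e₁ he₁ e₂ he₂ => hM.eq_of_mem_of_mem he₁.1 he₂.1 he₁.2 he₂.2
  induction e using Sym2.ind with
  | _ a b =>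
    obtain ⟨ha, hb⟩ := mk_mem_sym2_iff.mp (hM.subset_sym2 he)
    rcases hK a ha b hb (hM.mem_edgeSet _ he) with haK | hbK
    · exact ⟨a, haK, Sym2.mem_mk_left a b⟩
    · exact ⟨b, hbK, Sym2.mem_mk_right a b⟩

section DecidableEq

variable [DecidableEq V]

theorem IsVertexCoverOn.erase (hK : G.IsVertexCoverOn S K) (v : V) :
    G.IsVertexCoverOn (S.erase v) (K.erase v) := by
  intro a ha b hb hab
  rcases hK a (mem_of_mem_erase ha) b (mem_of_mem_erase hb) hab with haK | hbK
  · exact .inl (mem_erase.mpr ⟨ne_of_mem_erase ha, haK⟩)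
  · exact .inr (mem_erase.mpr ⟨ne_of_mem_erase hb, hbK⟩)

theorem notMem_of_mem_sym2_erase {e : Sym2 V} (he : e ∈ (S.erase v).sym2) : v ∉ e :=
  fun hv => (ne_of_mem_erase (mem_sym2_iff.mp he v hv)) rfl

theorem IsMatchingOn.insert_edge (h : G.IsMatchingOn ((S.erase u).erase v) M)
    (hu : u ∈ S) (hv : v ∈ S) (huv : G.Adj u v) :
    G.IsMatchingOn S (insert s(u, v) M) where
  subset_sym2 := insert_subset (mk_mem_sym2_iff.mpr ⟨hu, hv⟩)
    (h.subset_sym2.trans (sym2_mono ((erase_subset _ _).trans (erase_subset _ _))))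
  mem_edgeSet e he := by
    rcases mem_insert.mp he with rfl | he
    · exact huv
    · exact h.mem_edgeSet e he
  eq_of_mem_of_mem e f x he hf hxe hxf := by
    have hfree : ∀ g ∈ M, x ∈ s(u, v) → x ∉ g := by
      intro g hg hx hxg
      have hxS := mem_sym2_iff.mp (h.subset_sym2 hg) x hxg
      rcases Sym2.mem_iff.mp hx with rfl | rfl
      · exact ne_of_mem_erase (mem_of_mem_erase hxS) rfl
      · exact ne_of_mem_erase hxS rfl
    rcases mem_insert.mp he with rfl | he <;> rcases mem_insert.mp hf with rfl | hf
    · rfl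
    · exact absurd hxf (hfree f hf hxe)
    · exact absurd hxe (hfree e he hxf)
    · exact h.eq_of_mem_of_mem he hf hxe hxf

theorem IsMatchingOn.erase_edge (h : G.IsMatchingOn S M) (he : s(u, v) ∈ M) :
    G.IsMatchingOn ((S.erase u).erase v) (M.erase s(u, v)) where
  subset_sym2 f hf := by
    obtain ⟨hne, hf⟩ := mem_erase.mp hf
    refine mem_sym2_iff.mpr fun x hx => ?_
    have hxS := mem_sym2_iff.mp (h.subset_sym2 hf) x hx
    have hxu : x ≠ u := fun hxu =>
      hne (h.eq_of_mem_of_mem hf he hx (hxu ▸ Sym2.mem_mk_left u v))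
    have hxv : x ≠ v := fun hxv =>
      hne (h.eq_of_mem_of_mem hf he hx (hxv ▸ Sym2.mem_mk_right u v))
    exact mem_erase.mpr ⟨hxv, mem_erase.mpr ⟨hxu, hxS⟩⟩
  mem_edgeSet f hf := h.mem_edgeSet f (mem_of_mem_erase hf)
  eq_of_mem_of_mem _ _ _ he hf := h.eq_of_mem_of_mem (mem_of_mem_erase he) (mem_of_mem_erase hf)

theorem matchingNumOn_erase_erase_lt (hu : u ∈ S) (hz : z ∈ S) (huz : G.Adj u z)
    (h : G.matchingNumOn (S.erase u) = G.matchingNumOn S) :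
    G.matchingNumOn ((S.erase u).erase z) < G.matchingNumOn (S.erase u) := by
  by_contra! hge
  obtain ⟨M, hM, hcard⟩ := exists_isMatchingOn_card_eq G ((S.erase u).erase z)
  have hnot : s(u, z) ∉ M := fun he =>
    notMem_of_mem_sym2_erase (hM.subset_sym2 he) (Sym2.mem_mk_right u z)
  have := card_le_matchingNumOn (hM.insert_edge hu hz huz)
  rw [card_insert_of_notMem hnot] at this
  omega

theorem exists_adj_matchingNumOn_erase_erase_eq
    (h : G.matchingNumOn (S.erase u) < G.matchingNumOn S) :
    ∃ v ∈ S, G.Adj u v ∧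
      G.matchingNumOn ((S.erase u).erase v) = G.matchingNumOn (S.erase u) := by
  obtain ⟨M, hM, hcard⟩ := exists_isMatchingOn_card_eq G S
  obtain ⟨e, he, hue⟩ : ∃ e ∈ M, u ∈ e := by
    by_contra! hfree
    have hM' : G.IsMatchingOn (S.erase u) M := { hM with
      subset_sym2 := fun e he => mem_sym2_iff.mpr fun x hx => mem_erase.mpr
        ⟨fun hxu => hfree e he (hxu ▸ hx), mem_sym2_iff.mp (hM.subset_sym2 he) x hx⟩ }
    exact absurd (card_le_matchingNumOn hM') (hcard ▸ h).not_ge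
  obtain ⟨v, rfl⟩ := Sym2.mem_iff_exists.mp hue
  refine ⟨v, (mk_mem_sym2_iff.mp (hM.subset_sym2 he)).2, hM.mem_edgeSet _ he, ?_⟩
  have hle := card_le_matchingNumOn (hM.erase_edge he)
  rw [card_erase_of_mem he] at hle
  exact le_antisymm (matchingNumOn_mono (erase_subset _ _)) (by omega)

/-- Hall's theorem for `X`, after adding `d` dummy vertices adjacent to every vertex of `X`. -/
theorem exists_injective_of_deficiency [DecidableRel G.Adj] {X : Finset V} {d : ℕ}
    (hd : ∀ B ⊆ X, #B ≤ #(G.neighborFinsetOn S B) + d) :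
    ∃ f : X → V ⊕ Fin d, Function.Injective f ∧
      ∀ x : X, f x ∈ ({y ∈ S | G.Adj x y} : Finset V).disjSum univ := by
  refine (all_card_le_biUnion_card_iff_exists_injective _).mp fun B => ?_
  rcases B.eq_empty_or_nonempty with rfl | ⟨x₀, hx₀⟩
  · simp
  have hsub : (G.neighborFinsetOn S (B.map (Function.Embedding.subtype _))).disjSum
      (univ : Finset (Fin d)) ⊆
        B.biUnion fun x => ({y ∈ S | G.Adj x y} : Finset V).disjSum univ := by
    rintro (y | i) hy
    · simp only [neighborFinsetOn, inl_mem_disjSum, mem_filter, mem_map,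
        Function.Embedding.coe_subtype] at hy
      obtain ⟨hyS, _, ⟨x, hxB, rfl⟩, hxy⟩ := hy
      exact mem_biUnion.mpr ⟨x, hxB, inl_mem_disjSum.mpr (mem_filter.mpr ⟨hyS, hxy⟩)⟩
    · exact mem_biUnion.mpr ⟨x₀, hx₀, inr_mem_disjSum.mpr (mem_univ i)⟩
  calc #B = #(B.map (Function.Embedding.subtype _)) := (card_map _).symm
    _ ≤ _ := hd _ fun x hx => by
      obtain ⟨x, -, rfl⟩ := mem_map.mp hx
      exact x.2
    _ = _ := by rw [card_disjSum, card_univ, Fintype.card_fin]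
    _ ≤ _ := card_le_card hsub

theorem exists_isMatchingOn_of_injective {X : Finset V} {d : ℕ} {f : X → V ⊕ Fin d}
    (hf : Function.Injective f) (hXS : X ⊆ S)
    (hfS : ∀ x y, f x = .inl y → y ∈ S ∧ y ∉ X ∧ G.Adj x y) :
    ∃ M, G.IsMatchingOn S M ∧ #X ≤ #M + d := by
  have hshare : ∀ {x x' : X} {y y' v : V}, f x = .inl y → f x' = .inl y' →
      v ∈ s(x.1, y) → v ∈ s(x'.1, y') → x = x' := by
    intro x x' y y' v hxy hxy' hv hv'
    have hyX := (hfS x y hxy).2.1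
    have hyX' := (hfS x' y' hxy').2.1
    rcases Sym2.mem_iff.mp hv with rfl | rfl <;> rcases Sym2.mem_iff.mp hv' with h | h
    · exact Subtype.ext h
    · exact absurd (h ▸ x.2) hyX'
    · exact absurd (h ▸ x'.2) hyX
    · exact hf (hxy.trans (h ▸ hxy'.symm))
  let φ : X → Sym2 V ⊕ Fin d := fun x => (f x).map (fun y => s(x.1, y)) id
  have hφl : ∀ x e, φ x = .inl e ↔ ∃ y, f x = .inl y ∧ e = s(x.1, y) := fun x e => by
    rcases hfx : f x with y | i <;> simp [φ, hfx, eq_comm]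
  have hφ : Function.Injective φ := by
    intro x x' h
    rcases hfx : f x with y | i <;> rcases hfx' : f x' with y' | i' <;>
      simp only [φ, hfx, hfx', Sum.map_inl, Sum.map_inr, Sum.inl.injEq, Sum.inr.injEq,
        reduceCtorEq, id] at h
    · exact hshare hfx hfx' (Sym2.mem_mk_left _ _) (h ▸ Sym2.mem_mk_left _ _)
    · exact hf (hfx.trans (h ▸ hfx'.symm))
  have hmem : ∀ e, e ∈ (univ.image φ).toLeft ↔ ∃ x y, f x = .inl y ∧ e = s(x.1, y) := by
    simp only [mem_toLeft, mem_image, mem_univ, true_and, hφl, implies_true]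
  refine ⟨(univ.image φ).toLeft,
    ⟨fun e he => ?_, fun e he => ?_, fun e e' v he he' hve hve' => ?_⟩, ?_⟩
  · obtain ⟨x, y, hxy, rfl⟩ := (hmem e).mp he
    exact mk_mem_sym2_iff.mpr ⟨hXS x.2, (hfS x y hxy).1⟩
  · obtain ⟨x, y, hxy, rfl⟩ := (hmem e).mp he
    exact (hfS x y hxy).2.2
  · obtain ⟨x, y, hxy, rfl⟩ := (hmem e).mp he
    obtain ⟨x', y', hxy', rfl⟩ := (hmem e').mp he'
    obtain rfl := hshare hxy hxy' hve hve'
    rw [hxy, Sum.inl_injective.eq_iff] at hxy'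
    rw [hxy']
  · calc #X = #(univ.image φ) := by
          rw [card_image_of_injective _ hφ, card_univ, Fintype.card_coe]
      _ = #(univ.image φ).toLeft + #(univ.image φ).toRight := card_toLeft_add_card_toRight.symm
      _ ≤ _ := add_le_add_right ((card_le_univ _).trans (Fintype.card_fin d).le) _

theorem card_le_matchingNumOn_add [DecidableRel G.Adj] {X : Finset V} (hXS : X ⊆ S)
    (hX : ∀ x ∈ X, ∀ y ∈ X, ¬ G.Adj x y) {d : ℕ}
    (hd : ∀ B ⊆ X, #B ≤ #(G.neighborFinsetOn S B) + d) :
    #X ≤ G.matchingNumOn S + d := by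
  obtain ⟨f, hf, hfS⟩ := exists_injective_of_deficiency hd
  obtain ⟨M, hM, hcard⟩ := exists_isMatchingOn_of_injective hf hXS fun x y hxy => by
    have := hfS x
    rw [hxy, inl_mem_disjSum, mem_filter] at this
    exact ⟨this.1, fun hyX => hX x x.2 y hyX this.2, this.2⟩
  exact hcard.trans (add_le_add_left (card_le_matchingNumOn hM) d)

theorem exists_isVertexCoverOn_card_le (hG : G.IsBipartite) (S : Finset V) :
    ∃ K, G.IsVertexCoverOn S K ∧ #K ≤ G.matchingNumOn S := by
  classical
  obtain ⟨s, t, hst⟩ := isBipartite_iff_exists_isBipartiteWith.mp hG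
  set X := {x ∈ S | x ∈ s}
  set N := G.neighborFinsetOn S
  -- a set `A ⊆ X` of maximal deficiency `#A - #(N A)` yields the cover `(X \ A) ∪ N A`
  obtain ⟨A, hA, hAmax⟩ := X.powerset.exists_max_image (fun B => (#B : ℤ) - #(N B))
    ⟨∅, empty_mem_powerset _⟩
  have hAX := mem_powerset.mp hA
  have hX : ∀ x ∈ X, ∀ y ∈ X, ¬ G.Adj x y := fun x hx y hy hxy =>
    Set.disjoint_left.mp hst.disjoint (mem_filter.mp hy).2
      (hst.mem_of_mem_adj (mem_filter.mp hx).2 hxy)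
  have hN₀ : #(N A) ≤ #A := by
    simpa [N, neighborFinsetOn] using hAmax ∅ (empty_mem_powerset _)
  have hXν := card_le_matchingNumOn_add (X := X) (d := #A - #(N A)) (filter_subset _ S) hX
    fun B hB => by
      have : (#B : ℤ) - #(G.neighborFinsetOn S B) ≤ #A - #(N A) := hAmax B (mem_powerset.mpr hB)
      omega
  have hcover : ∀ a ∈ S, ∀ b ∈ S, G.Adj a b → a ∈ s →
      a ∈ (X \ A) ∪ N A ∨ b ∈ (X \ A) ∪ N A := by
    intro a ha b hb hab has
    by_cases haA : a ∈ A
    · exact .inr (mem_union_right _ (mem_filter.mpr ⟨hb, a, haA, hab⟩))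
    · exact .inl (mem_union_left _ (mem_sdiff.mpr ⟨mem_filter.mpr ⟨ha, has⟩, haA⟩))
  refine ⟨(X \ A) ∪ N A, fun a ha b hb hab => ?_, ?_⟩
  · rcases hst.mem_of_adj hab with ⟨has, -⟩ | ⟨-, hbs⟩
    · exact hcover a ha b hb hab has
    · exact (hcover b hb a ha hab.symm hbs).symm
  · have := card_le_card hAX
    calc #((X \ A) ∪ N A) ≤ #(X \ A) + #(N A) := card_union_le _ _
      _ = #X - #A + #(N A) := by rw [card_sdiff_of_subset hAX]
      _ ≤ G.matchingNumOn S := by omega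

theorem matchingNumOn_erase_lt_of_adj (hG : G.IsBipartite) (hu : u ∈ S) (hz : z ∈ S)
    (huz : G.Adj u z) (h : G.matchingNumOn (S.erase u) = G.matchingNumOn S) :
    G.matchingNumOn (S.erase z) < G.matchingNumOn S := by
  obtain ⟨K, hK, hKν⟩ := exists_isVertexCoverOn_card_le hG S
  have herase : ∀ v ∈ K, G.matchingNumOn (S.erase v) < G.matchingNumOn S := fun v hv =>
    calc G.matchingNumOn (S.erase v) ≤ #(K.erase v) := matchingNumOn_le_card (hK.erase v)
      _ < #K := card_erase_lt_of_mem hv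
      _ ≤ G.matchingNumOn S := hKν
  rcases hK u hu z hz huz with huK | hzK
  · exact absurd h (herase u huK).ne
  · exact herase z hzK

end DecidableEq

section Game

variable [Fintype V] [DecidableEq V] {w : V → ℕ}

theorem exists_nimMove_matchingNumOn_eq (hu : w u ≠ 0)
    (h : G.matchingNumOn ((tokens w).erase u) < G.matchingNumOn (tokens w)) :
    ∃ q, nimMove G.Adj (u, w) q ∧ q.2 q.1 ≠ 0 ∧
      G.matchingNumOn ((tokens q.2).erase q.1) = G.matchingNumOn (tokens q.2) := by
  obtain ⟨v, hv, huv, hν⟩ := exists_adj_matchingNumOn_erase_erase_eq h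
  have hupd : ∀ x ≠ u, Function.update w u 0 x = w x := fun x hx => Function.update_of_ne hx _ _
  refine ⟨(v, Function.update w u 0), ⟨huv, ?_, hupd⟩, ?_, ?_⟩
  · simpa using Nat.pos_of_ne_zero hu
  · simpa [hupd v huv.ne'] using hv
  · rwa [tokens_eq_erase hupd (Function.update_self u 0 w)]

theorem matchingNumOn_lt_of_nimMove (hG : G.IsBipartite) (hu : w u ≠ 0)
    (h : G.matchingNumOn ((tokens w).erase u) = G.matchingNumOn (tokens w))
    {q : V × (V → ℕ)} (hmove : nimMove G.Adj (u, w) q) :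
    q.2 q.1 = 0 ∨ G.matchingNumOn ((tokens q.2).erase q.1) < G.matchingNumOn (tokens q.2) := by
  obtain ⟨z, w'⟩ := q
  obtain ⟨huz, -, hw'⟩ := hmove
  have hzw : w' z = w z := hw' z huz.ne'
  by_cases hz : w z = 0
  · exact .inl (hzw.trans hz)
  have huT : u ∈ tokens w := mem_tokens.mpr hu
  have hzT : z ∈ tokens w := mem_tokens.mpr hz
  right
  by_cases hu' : w' u = 0
  · rw [tokens_eq_erase hw' hu']
    exact matchingNumOn_erase_erase_lt huT hzT huz h
  · rw [tokens_eq_of_ne_zero hw' hu hu']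
    exact matchingNumOn_erase_lt_of_adj hG huT hzT huz h

theorem nimRMWin_iff_matchingNumOn (hG : G.IsBipartite) (u : V) (w : V → ℕ) :
    NimRMWin G.Adj (u, w) ↔
      w u = 0 ∨ G.matchingNumOn ((tokens w).erase u) < G.matchingNumOn (tokens w) := by
  refine nimRMWin_iff_of_forall
    (fun p => p.2 p.1 = 0 ∨
      G.matchingNumOn ((tokens p.2).erase p.1) < G.matchingNumOn (tokens p.2))
    (fun _ => .inl) (fun ⟨u, w⟩ hP hu => ?_) (fun ⟨u, w⟩ hP q hmove => ?_) (u, w)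
  · obtain ⟨q, hmove, hq, hν⟩ := exists_nimMove_matchingNumOn_eq hu (hP.resolve_left hu)
    exact ⟨q, hmove, by simp [hq, hν]⟩
  · obtain ⟨hu, hν⟩ := not_or.mp hP
    exact matchingNumOn_lt_of_nimMove hG hu
      (le_antisymm (matchingNumOn_mono (erase_subset _ _)) (not_lt.mp hν)) hmove

end Game

def IsMatchingOn.toSubgraph (hM : G.IsMatchingOn S M) : G.Subgraph where
  verts := {v | ∃ e ∈ M, v ∈ e}
  Adj a b := s(a, b) ∈ M
  adj_sub h := hM.mem_edgeSet _ h
  edge_vert h := ⟨_, h, Sym2.mem_mk_left _ _⟩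
  symm := ⟨fun _ _ h => by rwa [Sym2.eq_swap]⟩

theorem IsMatchingOn.isMatching_toSubgraph (hM : G.IsMatchingOn S M) :
    hM.toSubgraph.IsMatching := by
  rintro v (⟨e, he, hv⟩ : ∃ e ∈ M, v ∈ e)
  obtain ⟨w, rfl⟩ := Sym2.mem_iff_exists.mp hv
  exact ⟨w, he, fun w' hw' => Sym2.congr_right.mp
    (hM.eq_of_mem_of_mem hw' he (Sym2.mem_mk_left v w') (Sym2.mem_mk_left v w))⟩

theorem IsMatchingOn.edgeSet_toSubgraph (hM : G.IsMatchingOn S M) :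
    hM.toSubgraph.edgeSet = M := by
  ext e
  induction e using Sym2.ind with
  | _ a b => exact Subgraph.mem_edgeSet

theorem IsMatchingOn.verts_toSubgraph_subset (hM : G.IsMatchingOn S M) :
    hM.toSubgraph.verts ⊆ S := by
  rintro v (⟨e, he, hv⟩ : ∃ e ∈ M, v ∈ e)
  exact mem_sym2_iff.mp (hM.subset_sym2 he) v hv

theorem Subgraph.IsMatching.isMatchingOn [Finite V] {H : G.Subgraph} (hH : H.IsMatching)
    (hS : H.verts ⊆ S) : G.IsMatchingOn S H.edgeSet.toFinite.toFinset where
  subset_sym2 e he := mem_sym2_iff.mpr fun v hv =>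
    hS (H.mem_verts_of_mem_edge (H.edgeSet.toFinite.mem_toFinset.mp he) hv)
  mem_edgeSet e he := H.edgeSet_subset (H.edgeSet.toFinite.mem_toFinset.mp he)
  eq_of_mem_of_mem e f v he hf hve hvf := by
    obtain ⟨a, rfl⟩ := Sym2.mem_iff_exists.mp hve
    obtain ⟨b, rfl⟩ := Sym2.mem_iff_exists.mp hvf
    have ha : H.Adj v a := Subgraph.mem_edgeSet.mp (H.edgeSet.toFinite.mem_toFinset.mp he)
    have hb : H.Adj v b := Subgraph.mem_edgeSet.mp (H.edgeSet.toFinite.mem_toFinset.mp hf)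
    rw [hH.eq_of_adj_left ha hb]

theorem ncard_edgeSet_le_matchingNumOn [Finite V] {H : G.Subgraph} (hH : H.IsMatching)
    (hS : H.verts ⊆ S) : H.edgeSet.ncard ≤ G.matchingNumOn S := by
  rw [Set.ncard_eq_toFinset_card _ H.edgeSet.toFinite]
  exact card_le_matchingNumOn (hH.isMatchingOn hS)

theorem exists_isMatching_ncard_eq_matchingNumOn (G : SimpleGraph V) (S : Finset V) :
    ∃ H : G.Subgraph, H.IsMatching ∧ H.verts ⊆ S ∧ H.edgeSet.ncard = G.matchingNumOn S := by
  obtain ⟨M, hM, hcard⟩ := exists_isMatchingOn_card_eq G S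
  exact ⟨hM.toSubgraph, hM.isMatching_toSubgraph, hM.verts_toSubgraph_subset,
    by rw [hM.edgeSet_toSubgraph, Set.ncard_coe_finset, hcard]⟩

theorem forall_maxMatching_mem_verts_iff [Fintype V] [DecidableEq V] (u : V) :
    (∀ M : G.Subgraph, MaxMatching G M → u ∈ M.verts) ↔
      G.matchingNumOn (univ.erase u) < G.matchingNumOn univ := by
  obtain ⟨H, hH, -, hHν⟩ := exists_isMatching_ncard_eq_matchingNumOn G univ
  constructor
  · intro hall
    by_contra! hge
    obtain ⟨H', hH', hH'S, hH'ν⟩ := exists_isMatching_ncard_eq_matchingNumOn G (univ.erase u)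
    have hmax : MaxMatching G H' := ⟨hH', fun N hN => by
      have := ncard_edgeSet_le_matchingNumOn hN (S := univ) (by simp)
      omega⟩
    simpa using hH'S (hall H' hmax)
  · intro hlt N hN
    by_contra hu
    have := ncard_edgeSet_le_matchingNumOn hN.1 (S := univ.erase u)
      fun v hv => by simpa using ne_of_mem_of_not_mem hv hu
    have := hN.2 H hH
    omega

end SimpleGraph

/-- Misère NimG-RM (no loops) on a bipartite graph with strictly positive weights is a
first-player win iff every maximum matching covers the starting vertex. -/
theorem stmt0 {V : Type} [Fintype V] (G : SimpleGraph V) (hbip : G.Colorable 2)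
    (w : V → ℕ) (hw : ∀ v, 0 < w v) (u : V) :
    NimRMWin G.Adj (u, w) ↔ ∀ M : G.Subgraph, MaxMatching G M → u ∈ M.verts := by
  classical
  have htokens : tokens w = univ := by ext v; simpa using (hw v).ne'
  rw [G.forall_maxMatching_mem_verts_iff, G.nimRMWin_iff_matchingNumOn hbip, htokens]
  simp [(hw u).ne']
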